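/- Let (X, cl) be a pregeometry arising from a group G of permutations of X via fixed-point closure, where for finite Y ⊆ X, cl(Y) is the set of points fixed by the pointwise stabilizer G_Y. Suppose G is hereditarily transitive. Then for any finite Y and any x, y ∈ X with x ∉ cl(Y): y ∈ cl(Y ∪ {x}) and y ∉ cl(Y) implies x ∈ cl(Y ∪ {y}). -/

import Mathlib

/-! Pick `f ∈ G_Y` with `f • y = x`. Two elements of `G` that agree on `Z` agree on `cl Z`.
If `f • x ∈ cl (Y ∪ {y})`, then for `g ∈ G_{Y ∪ {y}}` the elements `g * f` and `f` agree on
`Y ∪ {x}`, hence on `y`, so `g • x = x`. Otherwise, if also `x ∉ cl (Y ∪ {y})`, hereditary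
transitivity gives `h ∈ G_{Y ∪ {y}}` with `h • x = f • x`; then `h` and `f` agree on `Y ∪ {x}`,
hence on `y`, which forces `x = f • y = h • y = y`. -/

/-- The fixed-point closure: points of `X` fixed by every element of the pointwise
stabilizer of `Y` in `G`. -/
def fixCl (G : Type*) {X : Type*} [Group G] [MulAction G X] (Y : Set X) : Set X :=
  {x | ∀ g : G, (∀ a ∈ Y, g • a = a) → g • x = x}

section FixCl

variable {G X : Type*} [Group G] [MulAction G X]

theorem subset_fixCl (Z : Set X) : Z ⊆ fixCl G Z :=
  fun _ hz _ hg => hg _ hz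

theorem smul_eq_smul_of_mem_fixCl {Z : Set X} {z : X} (hz : z ∈ fixCl G Z) {g g' : G}
    (hgg' : ∀ a ∈ Z, g • a = g' • a) : g • z = g' • z := by
  have hfix : (g'⁻¹ * g) • z = z :=
    hz _ fun a ha => by rw [mul_smul, hgg' a ha, inv_smul_smul]
  rw [mul_smul, inv_smul_eq_iff] at hfix
  exact hfix

end FixCl

/-- Exchange for the fixed-point closure of a hereditarily transitive permutation group: if `G`
is hereditarily transitive on `X`, `Y` is finite, `x ∉ cl Y`, `y ∈ cl (Y ∪ {x})` and `y ∉ cl Y`,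
then `x ∈ cl (Y ∪ {y})`. -/
theorem stmt15 {G X : Type*} [Group G] [MulAction G X]
    (htrans : ∀ (Y : Finset X) (x y : X), x ∉ fixCl G (↑Y : Set X) →
      y ∉ fixCl G (↑Y : Set X) → ∃ g : G, (∀ a ∈ Y, g • a = a) ∧ g • x = y)
    (Y : Finset X) (x y : X)
    (hx : x ∉ fixCl G (↑Y : Set X))
    (hy1 : y ∈ fixCl G ((↑Y : Set X) ∪ {x}))
    (hy2 : y ∉ fixCl G (↑Y : Set X)) :
    x ∈ fixCl G ((↑Y : Set X) ∪ {y}) := by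
  classical
  obtain ⟨f, hfY, hfyx⟩ := htrans Y y x hy2 hx
  by_cases hfx : f • x ∈ fixCl G ((↑Y : Set X) ∪ {y})
  · intro g hg
    have hagree : ∀ a ∈ (↑Y : Set X) ∪ {x}, (g * f) • a = f • a := by
      rintro a (ha | rfl)
      · rw [mul_smul, hfY a ha, hg a (Or.inl ha)]
      · rw [mul_smul, hfx g hg]
    have hgfy := smul_eq_smul_of_mem_fixCl hy1 hagree
    rwa [mul_smul, hfyx] at hgfy
  by_contra hxcl
  have hcoe : (↑(insert y Y) : Set X) = (↑Y : Set X) ∪ {y} := by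
    rw [Finset.coe_insert, Set.insert_eq, Set.union_comm]
  obtain ⟨h, hhY, hhx⟩ := htrans (insert y Y) x (f • x) (hcoe ▸ hxcl) (hcoe ▸ hfx)
  have hagree : ∀ a ∈ (↑Y : Set X) ∪ {x}, h • a = f • a := by
    rintro a (ha | rfl)
    · rw [hfY a ha, hhY a (Finset.mem_insert_of_mem ha)]
    · exact hhx
  have hyx : y = x := by
    rw [← hfyx, ← smul_eq_smul_of_mem_fixCl hy1 hagree, hhY y (Finset.mem_insert_self y Y)]
  exact hxcl (hyx ▸ subset_fixCl _ (Or.inr rfl))
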